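/- The sequences {u^k} and {v^k} produced by the HPGCG algorithm are bounded. -/

import Mathlib

/-!
The step size `θₖ` is chosen so that the descent inequality `D_f(u, u + θ(v - u)) ≤ θ² D_f(u, v)`
and the convexity of `g` make `(f + g)(uᵏ)` non-increasing; coercivity of `f + g` then keeps `uᵏ`
in a ball. On that ball the subproblem objective at `uᵏ` is bounded above, hence so is its minimum,
attained at `vᵏ`. That minimum is at least `½‖vᵏ‖²_P + g(vᵏ) - C‖vᵏ‖`, where `C` bounds
`‖∇f(uᵏ) - Puᵏ‖`, and strong coercivity of `½‖·‖²_P + g` bounds `vᵏ`.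
-/

open RealInnerProductSpace Set

section Coercive

variable {E : Type*} [Norm E]

lemma exists_norm_le_of_coercive {F : E → ℝ}
    (hF : ∀ c : ℝ, ∃ R : ℝ, ∀ x : E, R ≤ ‖x‖ → c ≤ F x) (c : ℝ) :
    ∃ R : ℝ, ∀ x : E, F x ≤ c → ‖x‖ ≤ R := by
  obtain ⟨R, hR⟩ := hF (c + 1)
  refine ⟨R, fun x hx => ?_⟩
  by_contra! h
  linarith [hR x h.le]

lemma exists_norm_le_of_strongly_coercive {φ : E → ℝ}
    (hφ : ∀ c : ℝ, ∃ R : ℝ, ∀ x : E, R ≤ ‖x‖ → c * ‖x‖ ≤ φ x) (C B : ℝ) :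
    ∃ M : ℝ, ∀ x : E, φ x - C * ‖x‖ ≤ B → ‖x‖ ≤ M := by
  obtain ⟨R, hR⟩ := hφ (C + 1)
  refine ⟨max R B, fun x hx => ?_⟩
  rcases le_or_gt R ‖x‖ with hRx | hxR
  · linarith [hR x hRx, le_max_right R B]
  · exact hxR.le.trans (le_max_left R B)

end Coercive

lemma min_one_div_mem_Icc {N d : ℝ} (hN : 0 ≤ N) (hd : 0 ≤ d) :
    min 1 (N / (2 * d)) ∈ Icc (0 : ℝ) 1 :=
  ⟨le_min zero_le_one (by positivity), min_le_left _ _⟩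

lemma sq_min_one_div_mul_le {N d : ℝ} (hN : 0 ≤ N) (hd : 0 ≤ d) :
    min 1 (N / (2 * d)) ^ 2 * d ≤ min 1 (N / (2 * d)) * N := by
  set t := min 1 (N / (2 * d))
  have ht : 0 ≤ t := (min_one_div_mem_Icc hN hd).1
  rcases hd.eq_or_lt with rfl | hd
  · simpa using mul_nonneg ht hN
  · have h2t : t * (2 * d) ≤ N := (le_div_iff₀ (by positivity)).1 (min_le_right _ _)
    nlinarith

lemma LipschitzWith.norm_le_norm_zero_add {E F : Type*} [SeminormedAddCommGroup E]
    [SeminormedAddCommGroup F] {K : NNReal} {φ : E → F} (hφ : LipschitzWith K φ) (x : E) :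
    ‖φ x‖ ≤ ‖φ 0‖ + K * ‖x‖ := by
  simpa using norm_le_norm_add_const_of_dist_le (hφ.dist_le_mul x 0)

section InnerProductSpace

variable {H : Type*} [NormedAddCommGroup H] [InnerProductSpace ℝ H]

theorem ConvexOn.inner_le_sub_of_hasGradientAt [CompleteSpace H] {f : H → ℝ} {a x : H}
    (hf : ConvexOn ℝ univ f) (hfx : HasGradientAt f a x) (y : H) :
    ⟪a, y - x⟫ ≤ f y - f x := by
  set ℓ : ℝ →ᵃ[ℝ] H := AffineMap.lineMap x y
  have hline : ConvexOn ℝ univ (f ∘ ℓ) := by simpa using hf.comp_affineMap ℓ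
  have hderiv : HasDerivAt (f ∘ ℓ) ⟪a, y - x⟫ 0 := by
    have hfx' : HasFDerivAt f (InnerProductSpace.toDual ℝ H a) (ℓ 0) := by
      simpa [ℓ] using hfx.hasFDerivAt
    simpa using hfx'.comp_hasDerivAt 0 AffineMap.hasDerivAt_lineMap
  simpa [slope_def_field, ℓ] using
    hline.le_slope_of_hasDerivAt (mem_univ 0) (mem_univ 1) one_pos hderiv

/-- The HPGCG subproblem at `x`, with `a` standing for `∇f(x)`. -/
noncomputable def hpgcgSubproblem (g : H → ℝ) (P : H →L[ℝ] H) (a x w : H) : ℝ :=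
  ⟪a, w⟫ - ⟪x, P w⟫ + (1 / 2) * ⟪w, P w⟫ + g w

variable {g : H → ℝ} {P : H →L[ℝ] H}

lemma sub_norm_mul_le_hpgcgSubproblem (hP : ∀ x y : H, ⟪P x, y⟫ = ⟪x, P y⟫) (a x w : H) :
    (1 / 2) * ⟪w, P w⟫ + g w - ‖a - P x‖ * ‖w‖ ≤ hpgcgSubproblem g P a x w := by
  have hCS := neg_le_of_abs_le (abs_real_inner_le_norm (a - P x) w)
  rw [inner_sub_left, hP] at hCS
  rw [hpgcgSubproblem]
  linarith

lemma hpgcgSubproblem_self_le {x : H} (hPpos : 0 ≤ ⟪x, P x⟫) (a : H) :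
    hpgcgSubproblem g P a x x ≤ ⟪a, x⟫ + g x := by
  rw [hpgcgSubproblem]
  linarith

lemma half_inner_le_of_isMin_hpgcgSubproblem (hP : ∀ x y : H, ⟪P x, y⟫ = ⟪x, P y⟫) {a x y : H}
    (hy : ∀ w, hpgcgSubproblem g P a x y ≤ hpgcgSubproblem g P a x w) :
    (1 / 2) * ⟪x - y, P (x - y)⟫ ≤ ⟪a, x - y⟫ + g x - g y := by
  have hxy := hy x
  have hsymm : ⟪y, P x⟫ = ⟪x, P y⟫ := by
    rw [real_inner_comm, hP]
  simp only [hpgcgSubproblem] at hxy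
  rw [map_sub, inner_sub_left, inner_sub_right, inner_sub_right, inner_sub_right, hsymm]
  linarith

lemma hpgcg_step_descent {f : H → ℝ} {a x y : H} {d t : ℝ}
    (hg : ConvexOn ℝ univ g) (hP : ∀ x y : H, ⟪P x, y⟫ = ⟪x, P y⟫)
    (hPpos : 0 ≤ ⟪x - y, P (x - y)⟫)
    (hy : ∀ w, hpgcgSubproblem g P a x y ≤ hpgcgSubproblem g P a x w) (hd : 0 ≤ d)
    (hf_upper : ∀ s ∈ Icc (0 : ℝ) 1, f (x + s • (y - x)) ≤ f x + s * ⟪a, y - x⟫ + s ^ 2 * d)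
    (ht : t = min 1 ((⟪a, x - y⟫ + g x - g y) / (2 * d))) :
    f (x + t • (y - x)) + g (x + t • (y - x)) ≤ f x + g x := by
  have hgap : 0 ≤ ⟪a, x - y⟫ + g x - g y := by
    linarith [half_inner_le_of_isMin_hpgcgSubproblem hP hy]
  have ht01 : t ∈ Icc (0 : ℝ) 1 := ht ▸ min_one_div_mem_Icc hgap hd
  have hsq : t ^ 2 * d ≤ t * (⟪a, x - y⟫ + g x - g y) := ht ▸ sq_min_one_div_mul_le hgap hd
  have hg_upper : g (x + t • (y - x)) ≤ (1 - t) * g x + t * g y := by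
    rw [show x + t • (y - x) = (1 - t) • x + t • y by module]
    exact hg.2 (mem_univ x) (mem_univ y) (by linarith [ht01.2]) ht01.1 (by ring)
  have hf_step := hf_upper t ht01
  rw [show ⟪a, y - x⟫ = -⟪a, x - y⟫ by rw [← inner_neg_right, neg_sub]] at hf_step
  linear_combination hf_step + hg_upper + hsq

lemma inner_gradient_add_le_of_sublevel [CompleteSpace H] {f : H → ℝ} {f' : H → H}
    {L : NNReal} (hf : ConvexOn ℝ univ f) (hf' : ∀ x, HasGradientAt f (f' x) x)
    (hf'_lip : LipschitzWith L f') {x : H} {R c : ℝ} (hxR : ‖x‖ ≤ R) (hxc : f x + g x ≤ c) :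
    ⟪f' x, x⟫ + g x ≤ L * R ^ 2 + c - f 0 := by
  have h0 : ⟪f' 0, x⟫ ≤ f x - f 0 := by
    simpa using hf.inner_le_sub_of_hasGradientAt (hf' 0) x
  have hLip : ⟪f' x - f' 0, x⟫ ≤ L * R ^ 2 :=
    calc ⟪f' x - f' 0, x⟫ ≤ ‖f' x - f' 0‖ * ‖x‖ := real_inner_le_norm _ _
      _ ≤ L * ‖x‖ * ‖x‖ := by
          gcongr; simpa [dist_eq_norm] using hf'_lip.dist_le_mul x 0
      _ ≤ L * R ^ 2 := by
          rw [mul_assoc, ← sq]; gcongr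
  rw [inner_sub_left] at hLip
  linarith

end InnerProductSpace

theorem hpgcg_lemma3_boundedness_general
    {H : Type*} [NormedAddCommGroup H] [InnerProductSpace ℝ H] [CompleteSpace H]
    (f : H → ℝ) (f' : H → H) (g : H → ℝ) (P : H →L[ℝ] H) (L : NNReal)
    (Df : H → H → ℝ)
    (hf : ConvexOn ℝ Set.univ f)
    (hf' : ∀ x, HasGradientAt f (f' x) x)
    (hf'_lip : LipschitzWith L f')
    (hg : ConvexOn ℝ Set.univ g)
    (hP_sa : ∀ x y : H, ⟪P x, y⟫ = ⟪x, P y⟫)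
    (hP_pos : ∀ x : H, 0 ≤ ⟪x, P x⟫)
    -- f + g is coercive
    (hcoercive : ∀ c : ℝ, ∃ R : ℝ, ∀ x : H, R ≤ ‖x‖ → c ≤ f x + g x)
    -- (1/2)‖·‖_P² + g is strongly coercive
    (hscoercive : ∀ c : ℝ, ∃ R : ℝ, ∀ x : H, R ≤ ‖x‖ →
      c * ‖x‖ ≤ (1/2) * ⟪x, P x⟫ + g x)
    -- the three standing properties of D_f
    (hDf1 : ∀ x y : H, f y - f x - ⟪f' x, y - x⟫ ≤ Df x y)
    (hDf2 : ∀ x y : H, ∀ θ ∈ Set.Icc (0:ℝ) 1, Df x (x + θ • (y - x)) ≤ θ^2 * Df x y)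
    -- the HPGCG iteration
    (u v : ℕ → H) (θ : ℕ → ℝ)
    (D : ℕ → ℝ)
    (hD : ∀ k, D k = ⟪f' (u k), u k - v k⟫ + g (u k) - g (v k)
        - (1/2) * ⟪u k - v k, P (u k - v k)⟫)
    (hv : ∀ k, ∀ w : H,
      ⟪f' (u k), v k⟫ - ⟪u k, P (v k)⟫ + (1/2) * ⟪v k, P (v k)⟫ + g (v k) ≤
      ⟪f' (u k), w⟫ - ⟪u k, P w⟫ + (1/2) * ⟪w, P w⟫ + g w)
    (hθ : ∀ k, θ k = min 1
      ((D k + (1/2) * ⟪u k - v k, P (u k - v k)⟫) / (2 * Df (u k) (v k))))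
    (hupd : ∀ k, u (k + 1) = u k + θ k • (v k - u k)) :
    (∃ M : ℝ, ∀ k : ℕ, ‖u k‖ ≤ M) ∧ (∃ M : ℝ, ∀ k : ℕ, ‖v k‖ ≤ M) := by
  have hDf_nonneg : ∀ x y, 0 ≤ Df x y := fun x y => by
    linarith [hf.inner_le_sub_of_hasGradientAt (hf' x) y, hDf1 x y]
  have hf_upper : ∀ x y, ∀ s ∈ Icc (0 : ℝ) 1,
      f (x + s • (y - x)) ≤ f x + s * ⟪f' x, y - x⟫ + s ^ 2 * Df x y := by
    intro x y s hs
    have h := hDf1 x (x + s • (y - x))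
    rw [add_sub_cancel_left, real_inner_smul_right] at h
    linarith [hDf2 x y s hs]
  have hdescent : Antitone fun k => f (u k) + g (u k) := antitone_nat_of_succ_le fun k => by
    rw [hupd k]
    exact hpgcg_step_descent hg hP_sa (hP_pos _) (hv k) (hDf_nonneg _ _) (hf_upper _ _)
      (by rw [hθ k, hD k, sub_add_cancel])
  obtain ⟨R, hR⟩ := exists_norm_le_of_coercive hcoercive (f (u 0) + g (u 0))
  have hu : ∀ k, ‖u k‖ ≤ R := fun k => hR _ (hdescent (Nat.zero_le k))
  set B := L * R ^ 2 + (f (u 0) + g (u 0)) - f 0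
  obtain ⟨M, hM⟩ := exists_norm_le_of_strongly_coercive hscoercive (‖f' 0‖ + (L + ‖P‖) * R) B
  refine ⟨⟨R, hu⟩, M, fun k => hM _ ?_⟩
  have hC : ‖f' (u k) - P (u k)‖ ≤ ‖f' 0‖ + (L + ‖P‖) * R :=
    calc ‖f' (u k) - P (u k)‖ ≤ ‖f' (u k)‖ + ‖P (u k)‖ := norm_sub_le _ _
      _ ≤ ‖f' 0‖ + (L + ‖P‖) * ‖u k‖ := by
          linarith [hf'_lip.norm_le_norm_zero_add (u k), P.le_opNorm (u k)]
      _ ≤ ‖f' 0‖ + (L + ‖P‖) * R := by gcongr; exact hu k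
  calc _ ≤ (1 / 2) * ⟪v k, P (v k)⟫ + g (v k) - ‖f' (u k) - P (u k)‖ * ‖v k‖ := by gcongr
    _ ≤ hpgcgSubproblem g P (f' (u k)) (u k) (v k) := sub_norm_mul_le_hpgcgSubproblem hP_sa _ _ _
    _ ≤ hpgcgSubproblem g P (f' (u k)) (u k) (u k) := hv k (u k)
    _ ≤ ⟪f' (u k), u k⟫ + g (u k) := hpgcgSubproblem_self_le (hP_pos _) _
    _ ≤ B := inner_gradient_add_le_of_sublevel hf hf' hf'_lip (hu k) (hdescent (Nat.zero_le k))

/-- Lemma 3 of the HPGCG analysis: the sequences {uᵏ} and {vᵏ}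
produced by the HPGCG algorithm are bounded. -/
theorem hpgcg_lemma3_boundedness
    {H : Type*} [NormedAddCommGroup H] [InnerProductSpace ℝ H] [CompleteSpace H]
    (f : H → ℝ) (f' : H → H) (g : H → ℝ) (P : H →L[ℝ] H) (L : NNReal)
    (Df : H → H → ℝ)
    (hf : ConvexOn ℝ Set.univ f)
    (hf' : ∀ x, HasGradientAt f (f' x) x)
    (hf'_lip : LipschitzWith L f')
    (hg : ConvexOn ℝ Set.univ g)
    (hg_lsc : LowerSemicontinuous g)
    (hP_sa : ∀ x y : H, ⟪P x, y⟫ = ⟪x, P y⟫)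
    (hP_pos : ∀ x : H, 0 ≤ ⟪x, P x⟫)
    -- f + g is coercive
    (hcoercive : ∀ c : ℝ, ∃ R : ℝ, ∀ x : H, R ≤ ‖x‖ → c ≤ f x + g x)
    -- (1/2)‖·‖_P² + g is strongly coercive
    (hscoercive : ∀ c : ℝ, ∃ R : ℝ, ∀ x : H, R ≤ ‖x‖ →
      c * ‖x‖ ≤ (1/2) * ⟪x, P x⟫ + g x)
    -- the three standing properties of D_f
    (hDf1 : ∀ x y : H, f y - f x - ⟪f' x, y - x⟫ ≤ Df x y)
    (hDf2 : ∀ x y : H, ∀ θ ∈ Set.Icc (0:ℝ) 1, Df x (x + θ • (y - x)) ≤ θ^2 * Df x y)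
    (hDf3 : ∀ s : Set H, Bornology.IsBounded s → ∃ M, ∀ x ∈ s, ∀ y ∈ s, Df x y ≤ M)
    -- the HPGCG iteration
    (u v : ℕ → H) (θ : ℕ → ℝ)
    (D : ℕ → ℝ)
    (hD : ∀ k, D k = ⟪f' (u k), u k - v k⟫ + g (u k) - g (v k)
        - (1/2) * ⟪u k - v k, P (u k - v k)⟫)
    (hv : ∀ k, ∀ w : H,
      ⟪f' (u k), v k⟫ - ⟪u k, P (v k)⟫ + (1/2) * ⟪v k, P (v k)⟫ + g (v k) ≤
      ⟪f' (u k), w⟫ - ⟪u k, P w⟫ + (1/2) * ⟪w, P w⟫ + g w)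
    (hθ : ∀ k, θ k = min 1
      ((D k + (1/2) * ⟪u k - v k, P (u k - v k)⟫) / (2 * Df (u k) (v k))))
    (hupd : ∀ k, u (k + 1) = u k + θ k • (v k - u k)) :
    (∃ M : ℝ, ∀ k : ℕ, ‖u k‖ ≤ M) ∧ (∃ M : ℝ, ∀ k : ℕ, ‖v k‖ ≤ M) :=
  hpgcg_lemma3_boundedness_general f f' g P L Df hf hf' hf'_lip hg hP_sa hP_pos hcoercive hscoercive
    hDf1 hDf2 u v θ D hD hv hθ hupd
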